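/- Let d ≥ 3 and n_1,...,n_d ≥ 2 be integers, let N = ∏_{i=1}^{d-1} n_i and let M be the number of edges of Grid(n_1,...,n_{d-1}). Let f̃ be a Q_{d-1}-magic vertex labeling of Grid(n_1,...,n_{d-1}) with magic sum S, and define, for each edge e = {x,y} of Grid(n_1,...,n_d) with y_d = x_d+1 (and all other coordinates equal), g(e) = f̃(x_1,...,x_{d-1}) + n_d·M + (x_d-1)N if x_1+⋯+x_{d-1} is odd, and g(e) = f̃(x_1,...,x_{d-1}) + n_d·M + (n_d-1-x_d)N if x_1+⋯+x_{d-1} is even. Then for every (x_1,...,x_d) ∈ [n_1-1]×⋯×[n_d-1], the sum of g(e) over the 2^{d-1} edges e = {(x_1+ε_1,...,x_{d-1}+ε_{d-1},x_d), (x_1+ε_1,...,x_{d-1}+ε_{d-1},x_d+1)} with ε ∈ {0,1}^{d-1} equals S + 2^{d-1} n_d M + 2^{d-2}(n_d-2)N. -/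

import Mathlib

/-- The grid graph `Grid(n 0, …, n (d-1))`: vertices are tuples whose `i`-th coordinate
ranges over a set of size `n i` (we use `Fin (n i) = {0, …, n i - 1}`, corresponding to the
coordinate `[n i] = {1, …, n i}` via `v ↦ v + 1`); two vertices are adjacent iff they differ
by exactly one in one coordinate and agree in all others. -/
def gridGraph {d : ℕ} (n : Fin d → ℕ) : SimpleGraph (∀ i, Fin (n i)) where
  Adj x y := ∃ i, ((x i : ℕ) + 1 = (y i : ℕ) ∨ (y i : ℕ) + 1 = (x i : ℕ)) ∧
    ∀ j, j ≠ i → x j = y j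
  symm := by
    constructor
    rintro x y ⟨i, h, hj⟩
    exact ⟨i, h.symm, fun j hji => (hj j hji).symm⟩
  loopless := by
    constructor
    rintro x ⟨i, h, -⟩
    rcases h with h | h <;> omega

/-- `f` is an `H`-magic vertex labeling of `G` with `H`-magic sum `c`:
a bijection from the vertices of `G` onto `{1, …, |V|}` such that the vertex labels of every
subgraph of `G` isomorphic to `H` sum to `c`. -/
def IsMagicVertexLabeling {V : Type*} [Fintype V] {W : Type*}
    (G : SimpleGraph V) (H : SimpleGraph W) (f : V → ℤ) (c : ℤ) : Prop :=
  Set.BijOn f Set.univ (Set.Icc 1 (Fintype.card V : ℤ)) ∧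
  ∀ G' : G.Subgraph, Nonempty (G'.coe ≃g H) → ∑ᶠ v ∈ G'.verts, f v = c

/-- `g` is an `H`-magic edge labeling of `G` with `H`-magic sum `c`:
a bijection from the edges of `G` onto `{1, …, |E|}` such that the edge labels of every
subgraph of `G` isomorphic to `H` sum to `c`. -/
def IsMagicEdgeLabeling {V : Type*} [Fintype V] {W : Type*}
    (G : SimpleGraph V) (H : SimpleGraph W) (g : Sym2 V → ℤ) (c : ℤ) : Prop :=
  Set.BijOn g G.edgeSet (Set.Icc 1 (G.edgeSet.ncard : ℤ)) ∧
  ∀ G' : G.Subgraph, Nonempty (G'.coe ≃g H) → ∑ᶠ e ∈ G'.edgeSet, g e = c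

/-- `G` admits an `H`-covering: every edge of `G` belongs to at least one subgraph of `G`
isomorphic to `H`. -/
def AdmitsCovering {V W : Type*} (G : SimpleGraph V) (H : SimpleGraph W) : Prop :=
  ∀ e ∈ G.edgeSet, ∃ G' : G.Subgraph, e ∈ G'.edgeSet ∧ Nonempty (G'.coe ≃g H)

/-- `(Fv, Fe)` is an `H`-supermagic labeling of `G` with `H`-supermagic sum `c`:
the vertex part is a bijection onto `{1, …, |V|}`, the edge part is a bijection from the
edges onto `{|V|+1, …, |V|+|E|}` (together a bijection `V ∪ E → {1, …, |V|+|E|}` mapping `V`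
onto `{1, …, |V|}`), and the labels of every subgraph isomorphic to `H` sum to `c`. -/
def IsSupermagicLabeling {V : Type*} [Fintype V] {W : Type*}
    (G : SimpleGraph V) (H : SimpleGraph W) (Fv : V → ℤ) (Fe : Sym2 V → ℤ) (c : ℤ) : Prop :=
  Set.BijOn Fv Set.univ (Set.Icc 1 (Fintype.card V : ℤ)) ∧
  Set.BijOn Fe G.edgeSet
    (Set.Icc ((Fintype.card V : ℤ) + 1) ((Fintype.card V : ℤ) + (G.edgeSet.ncard : ℤ))) ∧
  ∀ G' : G.Subgraph, Nonempty (G'.coe ≃g H) →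
    (∑ᶠ v ∈ G'.verts, Fv v) + (∑ᶠ e ∈ G'.edgeSet, Fe e) = c

/-- `G` is `H`-supermagic with `H`-supermagic sum `c`. -/
def IsSupermagic {V : Type*} [Fintype V] {W : Type*}
    (G : SimpleGraph V) (H : SimpleGraph W) (c : ℤ) : Prop :=
  AdmitsCovering G H ∧ ∃ Fv Fe, IsSupermagicLabeling G H Fv Fe c

/-- The embedding of the index set `Fin (d-1)` (the first `d-1` coordinates) into `Fin d`. -/
def restrIdx (d : ℕ) : Fin (d - 1) → Fin d := Fin.castLE (Nat.sub_le d 1)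

/-- The index of the last coordinate in `Fin d` (for `d ≥ 1`). -/
def lastIdx (d : ℕ) (hd : 1 ≤ d) : Fin d := ⟨d - 1, by omega⟩

/-- Restriction of a grid vertex to its first `d-1` coordinates: a vertex of the
`(d-1)`-dimensional grid `Grid(n 0, …, n (d-2))`. -/
def restrict {d : ℕ} {n : Fin d → ℕ} (x : ∀ i, Fin (n i)) :
    ∀ i : Fin (d - 1), Fin (n (restrIdx d i)) := fun i => x (restrIdx d i)

lemma parity_sum (A B : ℤ) : ∀ (m : ℕ) (t : ℕ),
    ∑ ε : Fin (m+1) → Bool,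
      (if Odd (t + ∑ j : Fin (m+1), (if ε j = true then 1 else 0)) then A else B)
      = 2 ^ m * (A + B) := by
  intro m
  induction m with
  | zero =>
    intro t
    rw [show ((Finset.univ : Finset (Fin 1 → Bool)) = {fun _ => false, fun _ => true}) from by
      decide]
    rw [Finset.sum_pair (by intro h; simpa using congrFun h 0)]
    simp only [Fin.sum_univ_one, if_true, if_false]
    by_cases h : Odd t
    · have h2 : ¬ Odd (t + 1) := by rw [Nat.odd_iff] at *; omega
      simp [h, h2]
    · have h2 : Odd (t + 1) := by rw [Nat.odd_iff] at *; omega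
      simp [h, h2]
      ring
  | succ m ih =>
    intro t
    have hsplit : ∀ F : (Fin (m+2) → Bool) → ℤ,
        ∑ ε : Fin (m+2) → Bool, F ε = ∑ b : Bool, ∑ ε : Fin (m+1) → Bool, F (Fin.cons b ε) := by
      intro F
      rw [← (Fin.consEquiv (fun _ => Bool)).sum_comp, Fintype.sum_prod_type]
      rfl
    rw [hsplit]
    have hc : ∀ (b : Bool) (ε : Fin (m+1) → Bool),
        (∑ j : Fin (m+2), (if (Fin.cons b ε : Fin (m+2) → Bool) j = true then (1:ℕ) else 0))
        = (if b = true then 1 else 0) + ∑ j : Fin (m+1), (if ε j = true then 1 else 0) := by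
      intro b ε
      rw [Fin.sum_univ_succ]
      simp [Fin.cons_succ]
    have h1 : ∀ b : Bool, ∑ ε : Fin (m+1) → Bool,
        (if Odd (t + ∑ j : Fin (m+2), (if (Fin.cons b ε : Fin (m+2) → Bool) j = true then (1:ℕ) else 0)) then A else B)
        = 2 ^ m * (A + B) := by
      intro b
      calc ∑ ε : Fin (m+1) → Bool,
          (if Odd (t + ∑ j : Fin (m+2), (if (Fin.cons b ε : Fin (m+2) → Bool) j = true then (1:ℕ) else 0)) then A else B)
          = ∑ ε : Fin (m+1) → Bool,
          (if Odd ((t + if b = true then 1 else 0) + ∑ j : Fin (m+1), (if ε j = true then 1 else 0)) then A else B) := by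
            refine Finset.sum_congr rfl fun ε _ => ?_
            rw [hc]; ring_nf
        _ = 2 ^ m * (A + B) := ih _
    rw [Finset.sum_congr rfl fun b _ => h1 b]
    simp; ring

lemma parity_sum' (A B : ℤ) (m : ℕ) (hm : 1 ≤ m) (t : ℕ) :
    ∑ ε : Fin m → Bool,
      (if Odd (t + ∑ j : Fin m, (if ε j = true then 1 else 0)) then A else B)
      = 2 ^ (m - 1) * (A + B) := by
  obtain ⟨k, rfl⟩ : ∃ k, m = k + 1 := ⟨m - 1, by omega⟩
  simpa using parity_sum A B k t

def rangeSubgraph {V : Type*} (G : SimpleGraph V) (s : Set V) : G.Subgraph where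
  verts := s
  Adj a b := G.Adj a b ∧ a ∈ s ∧ b ∈ s
  adj_sub h := h.1
  edge_vert h := h.2.1
  symm := ⟨fun a b h => ⟨h.1.symm, h.2.2, h.2.1⟩⟩

lemma cube_adj {D : ℕ} (p q : ∀ _ : Fin D, Fin 2) :
    (gridGraph fun _ : Fin D => 2).Adj p q ↔ ∃ i, p i ≠ q i ∧ ∀ j, j ≠ i → p j = q j := by
  constructor
  · rintro ⟨i, h, hj⟩
    exact ⟨i, by rw [Fin.ne_iff_vne]; omega, hj⟩
  · rintro ⟨i, h, hj⟩
    refine ⟨i, ?_, hj⟩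
    rw [Fin.ne_iff_vne] at h
    have := (p i).isLt; have := (q i).isLt
    omega

lemma cube_subgraph_sum {D : ℕ} (nn : Fin D → ℕ) (f : (∀ i, Fin (nn i)) → ℤ) (S : ℤ)
    (hf : ∀ G' : (gridGraph nn).Subgraph,
      Nonempty (G'.coe ≃g gridGraph (fun _ : Fin D => (2:ℕ))) → ∑ᶠ v ∈ G'.verts, f v = S)
    (φ : (Fin D → Bool) → ∀ i, Fin (nn i)) (hinj : Function.Injective φ)
    (hadj : ∀ ε δ, (gridGraph nn).Adj (φ ε) (φ δ) ↔ ∃ i, ε i ≠ δ i ∧ ∀ j, j ≠ i → ε j = δ j) :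
    ∑ ε : Fin D → Bool, f (φ ε) = S := by
  classical
  let G' := rangeSubgraph (gridGraph nn) (Set.range φ)
  let e1 : (Fin D → Bool) ≃ G'.verts :=
    Equiv.ofBijective (fun ε => ⟨φ ε, ⟨ε, rfl⟩⟩)
      ⟨fun a b h => hinj (congrArg Subtype.val h), by rintro ⟨a, ⟨ε, rfl⟩⟩; exact ⟨ε, rfl⟩⟩
  have he1 : ∀ ε, (e1 ε : ∀ i, Fin (nn i)) = φ ε := fun ε => rfl
  let e0 : (Fin D → Bool) ≃ (∀ _ : Fin D, Fin 2) :=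
    Equiv.piCongrRight fun _ => finTwoEquiv.symm
  have he0 : ∀ ε i, e0 ε i = finTwoEquiv.symm (ε i) := fun ε i => rfl
  have iso : G'.coe ≃g gridGraph (fun _ : Fin D => (2:ℕ)) := by
    refine ⟨e1.symm.trans e0, ?_⟩
    intro a b
    obtain ⟨ε, rfl⟩ : ∃ ε, e1 ε = a := ⟨e1.symm a, e1.apply_symm_apply a⟩
    obtain ⟨δ, rfl⟩ : ∃ δ, e1 δ = b := ⟨e1.symm b, e1.apply_symm_apply b⟩
    simp only [Equiv.trans_apply, Equiv.symm_apply_apply, RelIso.coe_fn_mk]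
    rw [cube_adj, SimpleGraph.Subgraph.coe_adj, he1, he1]
    have : G'.Adj (φ ε) (φ δ) ↔ (gridGraph nn).Adj (φ ε) (φ δ) := by
      constructor
      · exact fun h => h.1
      · exact fun h => ⟨h, ⟨ε, rfl⟩, ⟨δ, rfl⟩⟩
    rw [this, hadj]
    constructor
    · rintro ⟨i, hne, heq⟩
      refine ⟨i, ?_, fun j hj => ?_⟩
      · intro h; exact hne (congrArg finTwoEquiv.symm h)
      · have := heq j hj
        rw [he0, he0] at this
        exact finTwoEquiv.symm.injective this
    · rintro ⟨i, hne, heq⟩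
      refine ⟨i, ?_, fun j hj => ?_⟩
      · rw [he0, he0]
        intro h; exact hne (finTwoEquiv.symm.injective h)
      · rw [he0, he0, heq j hj]
  have := hf G' ⟨iso⟩
  rw [← finsum_eq_sum_of_fintype, ← finsum_mem_range hinj]
  exact this


/-- with `g` defined on the edges of `Grid(n 0, …, n (d-1))` in the last
direction by `g(e) = f̃(x₁,…,x_{d-1}) + n_d·M + (x_d-1)N` if `x₁+⋯+x_{d-1}` is odd and
`g(e) = f̃(x₁,…,x_{d-1}) + n_d·M + (n_d-1-x_d)N` if it is even (where `f̃` is a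
`Q_{d-1}`-magic vertex labeling with magic sum `S`), for every
`(x₁,…,x_d) ∈ [n₁-1] × ⋯ × [n_d-1]` the labels of the `2^{d-1}` edges
`{(x+ε, x_d), (x+ε, x_d+1)}`, `ε ∈ {0,1}^{d-1}`, sum to
`S + 2^{d-1} n_d M + 2^{d-2}(n_d-2)N`. -/
theorem induction_step_connecting_edges_sum (d : ℕ) (hd : 3 ≤ d) (n : Fin d → ℕ)
    (hn : ∀ i, 2 ≤ n i) (N M : ℕ)
    (hN : N = ∏ i : Fin (d - 1), n (restrIdx d i))
    (hM : M = (gridGraph fun i : Fin (d - 1) => n (restrIdx d i)).edgeSet.ncard)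
    (ftil : (∀ i : Fin (d - 1), Fin (n (restrIdx d i))) → ℤ) (S : ℤ)
    (hftil : IsMagicVertexLabeling (gridGraph fun i : Fin (d - 1) => n (restrIdx d i))
      (gridGraph fun _ : Fin (d - 1) => (2 : ℕ)) ftil S)
    (g : Sym2 (∀ i, Fin (n i)) → ℤ)
    (hgvert : ∀ x y : ∀ i, Fin (n i),
      (∀ j : Fin (d - 1), x (restrIdx d j) = y (restrIdx d j)) →
      (x (lastIdx d (by omega)) : ℕ) + 1 = (y (lastIdx d (by omega)) : ℕ) →
      g s(x, y) = ftil (restrict x) + (n (lastIdx d (by omega)) : ℤ) * M +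
        (if Odd (∑ j : Fin (d - 1), ((x (restrIdx d j) : ℕ) + 1)) then
          ((x (lastIdx d (by omega)) : ℕ) : ℤ) * N
        else
          ((n (lastIdx d (by omega)) : ℤ) - 1 -
            (((x (lastIdx d (by omega)) : ℕ) : ℤ) + 1)) * N))
    (x : Fin d → ℕ) (hx : ∀ i, 1 ≤ x i ∧ x i ≤ n i - 1)
    (v w : (Fin (d - 1) → Bool) → ∀ j, Fin (n j))
    (hv : ∀ ε j, ((v ε) (restrIdx d j) : ℕ) + 1 = x (restrIdx d j) + (if ε j then 1 else 0))
    (hvd : ∀ ε, ((v ε) (lastIdx d (by omega)) : ℕ) + 1 = x (lastIdx d (by omega)))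
    (hw : ∀ ε j, ((w ε) (restrIdx d j) : ℕ) + 1 = x (restrIdx d j) + (if ε j then 1 else 0))
    (hwd : ∀ ε, ((w ε) (lastIdx d (by omega)) : ℕ) + 1 = x (lastIdx d (by omega)) + 1) :
    ∑ ε : Fin (d - 1) → Bool, g s(v ε, w ε)
      = S + 2 ^ (d - 1) * (n (lastIdx d (by omega)) : ℤ) * M +
        2 ^ (d - 2) * ((n (lastIdx d (by omega)) : ℤ) - 2) * N := by
  classical
  set L : Fin d := lastIdx d (by omega) with hL
  set t : ℕ := ∑ j : Fin (d - 1), x (restrIdx d j) with ht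
  set A : ℤ := ((x L : ℤ) - 1) * N with hA
  set B : ℤ := ((n L : ℤ) - 1 - (x L : ℤ)) * N with hB
  -- per-edge value
  have key : ∀ ε, g s(v ε, w ε) = ftil (restrict (v ε)) + (n L : ℤ) * M +
      (if Odd (t + ∑ j : Fin (d - 1), (if ε j = true then 1 else 0)) then A else B) := by
    intro ε
    have h1 : ∀ j : Fin (d - 1), (v ε) (restrIdx d j) = (w ε) (restrIdx d j) := by
      intro j
      have := hv ε j; have := hw ε j
      exact Fin.ext (by omega)
    have h2 : ((v ε) L : ℕ) + 1 = ((w ε) L : ℕ) := by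
      have := hvd ε; have := hwd ε; omega
    rw [hgvert (v ε) (w ε) h1 h2]
    have hsum : (∑ j : Fin (d - 1), (((v ε) (restrIdx d j) : ℕ) + 1))
        = t + ∑ j : Fin (d - 1), (if ε j = true then 1 else 0) := by
      rw [ht, ← Finset.sum_add_distrib]
      exact Finset.sum_congr rfl fun j _ => hv ε j
    have hcast : (((v ε) L : ℕ) : ℤ) = (x L : ℤ) - 1 := by
      have := hvd ε
      have h1 := (hx L).1
      push_cast
      omega
    rw [hsum, hcast]
    have : ((n L : ℤ) - 1 - (((x L : ℤ) - 1) + 1)) = (n L : ℤ) - 1 - (x L : ℤ) := by ring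
    rw [this]
  rw [Finset.sum_congr rfl fun ε _ => key ε]
  rw [Finset.sum_add_distrib, Finset.sum_add_distrib]
  -- the three sums
  have s1 : ∑ ε : Fin (d - 1) → Bool, ftil (restrict (v ε)) = S := by
    apply cube_subgraph_sum _ _ _ hftil.2 (fun ε => restrict (v ε))
    · intro ε δ h
      funext j
      have hj := congrFun h j
      have hε := hv ε j; have hδ := hv δ j
      have hval : ((v ε) (restrIdx d j) : ℕ) = ((v δ) (restrIdx d j) : ℕ) := by
        exact congrArg Fin.val hj
      cases hbε : ε j <;> cases hbδ : δ j
      · rfl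
      · exfalso; simp [hbε, hbδ] at hε hδ; omega
      · exfalso; simp [hbε, hbδ] at hε hδ; omega
      · rfl
    · intro ε δ
      constructor
      · rintro ⟨i, hi, hij⟩
        refine ⟨i, ?_, fun j hj => ?_⟩
        · intro hb
          have hε := hv ε i; have hδ := hv δ i
          rw [hb] at hε
          have : ((v ε) (restrIdx d i) : ℕ) = ((v δ) (restrIdx d i) : ℕ) := by omega
          simp only [restrict] at hi
          omega
        · have := hij j hj
          simp only [restrict] at this
          have hval := congrArg Fin.val this
          have hε := hv ε j; have hδ := hv δ j
          cases hbε : ε j <;> cases hbδ : δ j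
          · rfl
          · exfalso; simp [hbε, hbδ] at hε hδ; omega
          · exfalso; simp [hbε, hbδ] at hε hδ; omega
          · rfl
      · rintro ⟨i, hi, hij⟩
        refine ⟨i, ?_, fun j hj => ?_⟩
        · have hε := hv ε i; have hδ := hv δ i
          simp only [restrict]
          cases hbε : ε i <;> cases hbδ : δ i <;>
            simp [hbε, hbδ] at hε hδ hi <;> omega
        · have := hij j hj
          simp only [restrict]
          have hε := hv ε j; have hδ := hv δ j
          rw [this] at hε
          exact Fin.ext (by omega)
  have s2 : ∑ _ε : Fin (d - 1) → Bool, (n L : ℤ) * M = 2 ^ (d - 1) * (n L : ℤ) * M := by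
    rw [Finset.sum_const, Finset.card_univ]
    simp [Fintype.card_fun]
    ring
  have s3 : ∑ ε : Fin (d - 1) → Bool,
      (if Odd (t + ∑ j : Fin (d - 1), (if ε j = true then 1 else 0)) then A else B)
      = 2 ^ (d - 2) * ((n L : ℤ) - 2) * N := by
    rw [parity_sum' A B (d - 1) (by omega) t]
    have : A + B = ((n L : ℤ) - 2) * N := by rw [hA, hB]; ring
    rw [this, show d - 1 - 1 = d - 2 from by omega]
    ring
  rw [s1, s2, s3]
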